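/- arXiv:2001.08556 — 7 statements merged into one kernel-verified Lean document; each statement's English description precedes it below -/
import Mathlib

section
/- Let q be a complex number and let z be a complex number that is not an integer. Define F(w) := Σ_{l=0}^{∞} (q^l / l!) · Γ(w − l) for every complex w that is not an integer (the series converges absolutely). Then F(z + 1) + q · F(z − 1) = z · F(z). -/
/-!
Write `t_l(w) = q^l / l! · Γ(w - l)`. The functional equation `Γ(s + 1) = s Γ(s)` gives
`t_l(z + 1) = (z - l) t_l(z)` and `q t_l(z - 1) = (l + 1) t_{l+1}(z)`, so after an index shift
`F(z + 1) = Σ (z - l) t_l(z)` and `q F(z - 1) = Σ l t_l(z)`, which add up to `z F(z)`.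
All series converge by the ratio test, since `t_{l+1}(w) / t_l(w) = q / ((l + 1)(w - l - 1)) → 0`.
-/

open Complex Filter

namespace GammaSeries

noncomputable def term (q w : ℂ) (l : ℕ) : ℂ := q ^ l / (l.factorial : ℂ) * Gamma (w - l)

lemma mul_term_succ (q w : ℂ) (l : ℕ) (hw : w - (l + 1) ≠ 0) :
    ((l + 1) * (w - (l + 1))) * term q w (l + 1) = q * term q w l := by
  have hGamma : Gamma (w - l) = (w - (l + 1)) * Gamma (w - (l + 1)) := by
    rw [← Gamma_add_one _ hw]; ring_nf
  have hl : (l : ℂ) + 1 ≠ 0 := Nat.cast_add_one_ne_zero l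
  simp only [term, hGamma, Nat.factorial_succ]
  push_cast
  field_simp
  ring

lemma summable_term (q w : ℂ) : Summable (term q w) := by
  obtain ⟨N, hN⟩ := exists_nat_ge (‖w‖ + 2 * ‖q‖)
  refine summable_of_ratio_norm_eventually_le (r := 1 / 2) (by norm_num) ?_
  filter_upwards [eventually_ge_atTop N] with l hl
  have hlN : (N : ℝ) ≤ l := by exact_mod_cast hl
  have hdist : 1 + 2 * ‖q‖ ≤ ‖w - (l + 1)‖ := by
    have := norm_sub_norm_le ((l : ℂ) + 1) w
    rw [norm_sub_rev, ← Nat.cast_add_one, Complex.norm_natCast] at this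
    push_cast at this
    linarith
  set A := ((l : ℝ) + 1) * ‖w - (l + 1)‖
  have hA : 1 + 2 * ‖q‖ ≤ A := by
    have : ‖w - (l + 1)‖ ≤ A := le_mul_of_one_le_left (norm_nonneg _) (by simp)
    linarith
  have hnorm : A * ‖term q w (l + 1)‖ = ‖q‖ * ‖term q w l‖ := by
    have hw : w - (l + 1) ≠ 0 := norm_pos_iff.mp (by linarith [norm_nonneg q])
    rw [← norm_mul, ← mul_term_succ q w l hw, norm_mul, norm_mul, ← Nat.cast_add_one,
      Complex.norm_natCast]
    push_cast
    rfl
  have hqA : ‖q‖ ≤ 1 / 2 * A := by linarith [norm_nonneg q]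
  have hApos : 0 < A := by linarith [norm_nonneg q]
  nlinarith [norm_nonneg (term q w l), norm_nonneg (term q w (l + 1))]

lemma term_add_one (q w : ℂ) (l : ℕ) (hw : w - l ≠ 0) :
    term q (w + 1) l = (w - l) * term q w l := by
  simp only [term, show w + 1 - l = (w - l) + 1 by ring, Gamma_add_one _ hw]
  ring

lemma mul_term_sub_one (q w : ℂ) (l : ℕ) :
    q * term q (w - 1) l = ((l + 1 : ℕ) : ℂ) * term q w (l + 1) := by
  have hl : (l : ℂ) + 1 ≠ 0 := Nat.cast_add_one_ne_zero l
  simp only [term, Nat.factorial_succ, show w - 1 - l = w - ((l + 1 : ℕ) : ℂ) by push_cast; ring]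
  push_cast
  field_simp
  ring

lemma tsum_natCast_mul_term (q w : ℂ) :
    ∑' l : ℕ, (l : ℂ) * term q w l = q * ∑' l : ℕ, term q (w - 1) l := by
  have hshift : (fun l : ℕ => ((l + 1 : ℕ) : ℂ) * term q w (l + 1)) =
      fun l => q * term q (w - 1) l := funext fun l => (mul_term_sub_one q w l).symm
  rw [tsum_eq_zero_add' (by rw [hshift]; exact (summable_term q (w - 1)).mul_left q), hshift,
    tsum_mul_left]
  simp

end GammaSeries

open GammaSeries

/-- Three-term difference equation (quantum spectral curve) for
`F(w) = Σ_{l≥0} (q^l / l!) Γ(w − l)`: one has `F(z+1) + q·F(z−1) = z·F(z)`. -/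
theorem stmt3 (q z : ℂ) (hz : ∀ m : ℤ, z ≠ m)
    (F : ℂ → ℂ)
    (hF : ∀ w : ℂ, (∀ m : ℤ, w ≠ m) →
      F w = ∑' l : ℕ, q ^ l / (l.factorial : ℂ) * Complex.Gamma (w - l)) :
    F (z + 1) + q * F (z - 1) = z * F z := by
  have hFt : ∀ w : ℂ, (∀ m : ℤ, w ≠ m) → F w = ∑' l : ℕ, term q w l := hF
  have hz_add : ∀ m : ℤ, z + 1 ≠ m := fun m h => hz (m - 1) (by push_cast; linear_combination h)
  have hz_sub : ∀ m : ℤ, z - 1 ≠ m := fun m h => hz (m + 1) (by push_cast; linear_combination h)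
  have hz_nat : ∀ l : ℕ, z - l ≠ 0 := fun l h => hz l (by push_cast; exact sub_eq_zero.mp h)
  have hplus : term q (z + 1) = fun l => (z - l) * term q z l :=
    funext fun l => term_add_one q z l (hz_nat l)
  have hsum_plus : Summable fun l : ℕ => (z - l) * term q z l := hplus ▸ summable_term q (z + 1)
  have hsum_nat : Summable fun l : ℕ => (l : ℂ) * term q z l :=
    (hsum_plus.mul_left (-1)).add ((summable_term q z).mul_left z) |>.congr fun l => by ring
  rw [hFt _ hz_add, hFt _ hz_sub, hFt _ hz, ← tsum_natCast_mul_term, hplus,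
    ← hsum_plus.tsum_add hsum_nat, ← tsum_mul_left]
  exact tsum_congr fun l => by ring
end

section
/- Let ħ > 0 be real, let q ∈ ℂ, n ∈ ℝ, k ∈ ℤ, and let z be a complex number such that z/ħ + k − n − 1/2 is not an integer. Define Ψ(z) := ħ^{z/ħ + k − n − 1/2} · Σ_{l=0}^{∞} ((q/ħ²)^l / l!) · Γ(z/ħ + k − n − 1/2 − l), where ħ^w := exp(w · log ħ) and the series converges absolutely. Then Ψ(z + ħ) + q · Ψ(z − ħ) − z · Ψ(z) + ħ·(n + 1/2 − k) · Ψ(z) = 0. -/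
/-!
Put `w = z/ħ + k − n − 1/2` and `c = q/ħ²`, so that `Ψ(z) = ħ^w F(w)` with
`F(w) = Σ_l c^l/l! Γ(w − l)`. Since `Γ(w + 1 − l) = (w − l) Γ(w − l)`, and the factor `l` cancels
against `l!` after a shift of the summation index, `F(w + 1) = w F(w) − c F(w − 1)`; multiplying by
`ħ^{w+1}` gives the quantum spectral curve. The series converges by the ratio test: consecutive
terms have ratio `c / ((l + 1)(w − l − 1)) → 0`.
-/

open Filter Topology Nat

theorem summable_of_succ_eq_smul_of_tendsto_zero {𝕜 E : Type*} [NormedField 𝕜]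
    [NormedAddCommGroup E] [NormedSpace 𝕜 E] [CompleteSpace E] {a : ℕ → E} {r : ℕ → 𝕜}
    (hr : Tendsto r atTop (𝓝 0)) (ha : ∀ l, a (l + 1) = r l • a l) : Summable a := by
  refine summable_of_ratio_norm_eventually_le (r := 1 / 2) (by norm_num) ?_
  have hsmall : ∀ᶠ l in atTop, ‖r l‖ ≤ 1 / 2 :=
    (tendsto_norm_zero.comp hr).eventually_le_const (by norm_num)
  filter_upwards [hsmall] with l hl
  rw [ha, norm_smul]
  exact mul_le_mul_of_nonneg_right hl (norm_nonneg _)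

namespace Complex

noncomputable def gammaSeriesTerm (c w : ℂ) (l : ℕ) : ℂ := c ^ l / l ! * Gamma (w - l)

noncomputable def gammaSeries (c w : ℂ) : ℂ := ∑' l, gammaSeriesTerm c w l

variable (c : ℂ) {w : ℂ}

theorem gammaSeriesTerm_succ {l : ℕ} (hw : w - l - 1 ≠ 0) :
    gammaSeriesTerm c w (l + 1) = c / ((l + 1) * (w - l - 1)) * gammaSeriesTerm c w l := by
  have hΓ : Gamma (w - l) = (w - l - 1) * Gamma (w - l - 1) := by
    simpa using Gamma_add_one _ hw
  have hl : (l : ℂ) + 1 ≠ 0 := Nat.cast_add_one_ne_zero l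
  simp only [gammaSeriesTerm, factorial_succ, pow_succ, hΓ]
  push_cast
  rw [show w - ((l : ℂ) + 1) = w - l - 1 by ring]
  field_simp

theorem gammaSeriesTerm_add_one {l : ℕ} (hw : w - l ≠ 0) :
    gammaSeriesTerm c (w + 1) l = (w - l) * gammaSeriesTerm c w l := by
  simp only [gammaSeriesTerm, add_sub_right_comm w 1, Gamma_add_one _ hw]
  ring

theorem natCast_add_one_mul_gammaSeriesTerm_succ (w : ℂ) (l : ℕ) :
    (l + 1) * gammaSeriesTerm c w (l + 1) = c * gammaSeriesTerm c (w - 1) l := by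
  have hl : (l : ℂ) + 1 ≠ 0 := Nat.cast_add_one_ne_zero l
  simp only [gammaSeriesTerm, factorial_succ, pow_succ]
  push_cast
  rw [show w - ((l : ℂ) + 1) = w - 1 - l by ring]
  field_simp

theorem tendsto_const_div_succ_mul_sub_succ_nhds_zero (w : ℂ) :
    Tendsto (fun l : ℕ => c / ((l + 1) * (w - l - 1))) atTop (𝓝 0) := by
  have h₁ : Tendsto (fun l : ℕ => ((l : ℂ) + 1)⁻¹) atTop (𝓝 0) := by
    simpa using tendsto_one_div_add_atTop_nhds_zero_nat (𝕜 := ℂ)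
  have h₂ : Tendsto (fun l : ℕ => (w - l - 1)⁻¹) atTop (𝓝 0) :=
    tendsto_inv₀_cobounded.comp <| (tendsto_sub_const_cobounded 1).comp <|
      (tendsto_const_sub_cobounded w).comp tendsto_natCast_atTop_cobounded
  simpa [div_eq_mul_inv, mul_inv] using (h₂.mul h₁).const_mul c

theorem summable_gammaSeriesTerm (hw : ∀ m : ℤ, w ≠ m) : Summable (gammaSeriesTerm c w) :=
  summable_of_succ_eq_smul_of_tendsto_zero (tendsto_const_div_succ_mul_sub_succ_nhds_zero c w)
    fun l => gammaSeriesTerm_succ c fun h => hw (l + 1) (by push_cast; linear_combination h)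

theorem hasSum_natCast_mul_gammaSeriesTerm (hw : ∀ m : ℤ, w ≠ m) :
    HasSum (fun l : ℕ => l * gammaSeriesTerm c w l) (c * gammaSeries c (w - 1)) := by
  have hw' : ∀ m : ℤ, w - 1 ≠ m := fun m h => hw (m + 1) (by push_cast; linear_combination h)
  rw [← hasSum_nat_add_iff' 1]
  simp only [Finset.range_one, Finset.sum_singleton, cast_zero, zero_mul, sub_zero, cast_add,
    cast_one, natCast_add_one_mul_gammaSeriesTerm_succ]
  exact (summable_gammaSeriesTerm c hw').hasSum.mul_left c

theorem gammaSeries_add_one (hw : ∀ m : ℤ, w ≠ m) :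
    gammaSeries c (w + 1) = w * gammaSeries c w - c * gammaSeries c (w - 1) := by
  refine (tsum_congr fun l => ?_).trans (((summable_gammaSeriesTerm c hw).hasSum.mul_left w).sub
    (hasSum_natCast_mul_gammaSeriesTerm c hw)).tsum_eq
  rw [gammaSeriesTerm_add_one c fun h => hw l (by push_cast; linear_combination h)]
  ring

end Complex

/-- Quantum spectral curve for the modified wave function
`Ψ(z) = hbar^{z/hbar+k−n−1/2} Σ_{l≥0} ((q/hbar²)^l/l!) Γ(z/hbar+k−n−1/2−l)`:
`Ψ(z+hbar) + q·Ψ(z−hbar) − z·Ψ(z) + hbar(n+1/2−k)·Ψ(z) = 0`. -/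
theorem stmt4 (hbar : ℝ) (hhbar : 0 < hbar) (q : ℂ) (n : ℝ) (k : ℤ) (z : ℂ)
    (hz : ∀ m : ℤ, z / (hbar : ℂ) + (k : ℂ) - (n : ℂ) - 1/2 ≠ (m : ℂ))
    (Ψ : ℂ → ℂ)
    (hΨ : ∀ u : ℂ, Ψ u =
      Complex.exp ((u / (hbar : ℂ) + (k : ℂ) - (n : ℂ) - 1/2) * (Real.log hbar : ℂ)) *
        ∑' l : ℕ, (q / (hbar : ℂ) ^ 2) ^ l / (l.factorial : ℂ) *
          Complex.Gamma (u / (hbar : ℂ) + (k : ℂ) - (n : ℂ) - 1/2 - (l : ℂ))) :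
    Ψ (z + (hbar : ℂ)) + q * Ψ (z - (hbar : ℂ)) - z * Ψ z
      + (hbar : ℂ) * ((n : ℂ) + 1/2 - (k : ℂ)) * Ψ z = 0 := by
  have hħ : (hbar : ℂ) ≠ 0 := by exact_mod_cast hhbar.ne'
  have hexp : Complex.exp (Real.log hbar) = hbar := by
    rw [← Complex.ofReal_exp, Real.exp_log hhbar]
  obtain ⟨w, hw⟩ : ∃ w : ℂ, w = z / hbar + k - n - 1/2 := ⟨_, rfl⟩
  rw [← hw] at hz
  have hΨw : ∀ u, Ψ u = Complex.exp ((u / hbar + k - n - 1/2) * Real.log hbar) *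
      Complex.gammaSeries (q / hbar ^ 2) (u / hbar + k - n - 1/2) := hΨ
  have hplus : (z + hbar) / hbar + k - n - 1/2 = w + 1 := by rw [hw]; field_simp; ring
  have hminus : (z - hbar) / hbar + k - n - 1/2 = w - 1 := by rw [hw]; field_simp; ring
  have hzw : (hbar : ℂ) * w = z + hbar * (k - n - 1/2) := by rw [hw]; field_simp; ring
  have hc : (hbar : ℂ) * (q / hbar ^ 2) = q / hbar := by field_simp
  rw [hΨw, hΨw, hΨw, hplus, hminus, ← hw, Complex.gammaSeries_add_one _ hz, add_mul, sub_mul,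
    one_mul, Complex.exp_add, Complex.exp_sub, hexp]
  set E := Complex.exp (w * Real.log hbar)
  set F := Complex.gammaSeries (q / hbar ^ 2)
  linear_combination (E * F w) * hzw - (E * F (w - 1)) * hc
end

section
/- Let q ∈ ℂ, n ∈ ℂ, k ∈ ℤ, and let z be a complex number such that z − n − 1/2 is not an integer. For j ∈ ℤ define Ψ_j(z) := Σ_{l=0}^{∞} (q^l / l!) · Γ(z + j − n − 1/2 − l) (each series converges absolutely). Then Ψ_k(z) + q · Ψ_{k−2}(z) + (n + 1/2 − z) · Ψ_{k−1}(z) = (k − 1) · Ψ_{k−1}(z). -/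
open Filter

lemma gamma_series_summable (q c : ℂ) (hc : ∀ m : ℤ, c ≠ (m : ℂ)) :
    Summable (fun l : ℕ => q ^ l / (l.factorial : ℂ) * Complex.Gamma (c - (l : ℂ))) := by
  apply summable_of_ratio_norm_eventually_le (r := 1/2) (by norm_num)
  obtain ⟨N, hN⟩ := exists_nat_ge (‖c‖ + 2 * ‖q‖ + 1)
  filter_upwards [eventually_atTop.2 ⟨N, fun l hl => hl⟩] with l hl
  have hc0 : c - ((l : ℂ) + 1) ≠ 0 := by
    intro h
    exact hc ((l : ℤ) + 1) (by push_cast; linear_combination h)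
  have hG : Complex.Gamma (c - ((l : ℂ) + 1)) =
      Complex.Gamma (c - (l : ℂ)) / (c - ((l : ℂ) + 1)) := by
    have h := Complex.Gamma_add_one _ hc0
    have h2 : c - ((l : ℂ) + 1) + 1 = c - (l : ℂ) := by ring
    rw [h2] at h
    rw [eq_div_iff hc0, h]
    ring
  have hfac : ((l.factorial : ℂ)) ≠ 0 := by
    exact_mod_cast Nat.factorial_ne_zero l
  have hl1 : ((l : ℂ) + 1) ≠ 0 := by
    have : ((l + 1 : ℕ) : ℂ) ≠ 0 := Nat.cast_ne_zero.2 (Nat.succ_ne_zero l)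
    push_cast at this
    exact this
  have key : q ^ (l + 1) / ((l + 1).factorial : ℂ) * Complex.Gamma (c - ((l + 1 : ℕ) : ℂ))
      = q / (((l : ℂ) + 1) * (c - ((l : ℂ) + 1))) *
        (q ^ l / (l.factorial : ℂ) * Complex.Gamma (c - (l : ℂ))) := by
    push_cast
    rw [hG, Nat.factorial_succ]
    push_cast
    field_simp
    ring
  rw [key, norm_mul]
  have hnl : ‖((l : ℂ) + 1)‖ = (l : ℝ) + 1 := by
    rw [show ((l : ℂ) + 1) = ((l + 1 : ℕ) : ℂ) by push_cast; ring, Complex.norm_natCast]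
    push_cast
    ring
  have hcl : (2 : ℝ) * ‖q‖ + 1 ≤ ‖c - ((l : ℂ) + 1)‖ := by
    have h1 := norm_sub_norm_le ((l : ℂ) + 1) c
    rw [norm_sub_rev] at h1
    have h3 : (N : ℝ) ≤ (l : ℝ) := by exact_mod_cast hl
    nlinarith
  have h4 : (1 : ℝ) ≤ ‖((l : ℂ) + 1)‖ := by
    rw [hnl]
    have h0 : (0 : ℝ) ≤ (l : ℝ) := Nat.cast_nonneg l
    linarith
  have hb : ‖q / (((l : ℂ) + 1) * (c - ((l : ℂ) + 1)))‖ ≤ 1/2 := by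
    rw [norm_div, norm_mul]
    have hp : (0 : ℝ) < ‖((l : ℂ) + 1)‖ * ‖c - ((l : ℂ) + 1)‖ := by
      apply mul_pos (lt_of_lt_of_le one_pos h4)
      nlinarith [norm_nonneg q]
    rw [div_le_iff₀ hp]
    nlinarith [norm_nonneg q, norm_nonneg (c - ((l : ℂ) + 1))]
  calc ‖q / (((l : ℂ) + 1) * (c - ((l : ℂ) + 1)))‖ *
        ‖q ^ l / (l.factorial : ℂ) * Complex.Gamma (c - (l : ℂ))‖
      ≤ 1/2 * ‖q ^ l / (l.factorial : ℂ) * Complex.Gamma (c - (l : ℂ))‖ := by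
        apply mul_le_mul_of_nonneg_right hb (norm_nonneg _)
    _ = _ := by ring

/-- The Kac–Schwarz lowering operator identity for the Gamma-series
`Ψ_j(z) = Σ_{l≥0} (q^l/l!) Γ(z+j−n−1/2−l)`:
`Ψ_k + q·Ψ_{k−2} + (n+1/2−z)·Ψ_{k−1} = (k−1)·Ψ_{k−1}`. -/
theorem stmt5 (q n : ℂ) (k : ℤ) (z : ℂ)
    (hz : ∀ m : ℤ, z - n - 1/2 ≠ (m : ℂ))
    (Ψ : ℤ → ℂ)
    (hΨ : ∀ j : ℤ, Ψ j = ∑' l : ℕ, q ^ l / (l.factorial : ℂ) *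
        Complex.Gamma (z + (j : ℂ) - n - 1/2 - (l : ℂ))) :
    Ψ k + q * Ψ (k - 2) + (n + 1/2 - z) * Ψ (k - 1) = ((k : ℂ) - 1) * Ψ (k - 1) := by
  set c : ℂ := z + ((k : ℂ) - 1) - n - 1/2 with hcdef
  have hc : ∀ m : ℤ, c ≠ (m : ℂ) := by
    intro m h
    exact hz (m - k + 1) (by push_cast; linear_combination h)
  have hc' : ∀ m : ℤ, c + 1 ≠ (m : ℂ) := by
    intro m h
    exact hc (m - 1) (by push_cast; linear_combination h)
  set g : ℕ → ℂ := fun l => q ^ l / (l.factorial : ℂ) * Complex.Gamma (c - (l : ℂ)) with hgdef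
  have Sg : Summable g := gamma_series_summable q c hc
  have Sf : Summable (fun l : ℕ => (c - (l : ℂ)) * g l) := by
    have hs := gamma_series_summable q (c + 1) hc'
    apply hs.congr
    intro l
    have hne : c - (l : ℂ) ≠ 0 := by
      intro h
      exact hc l (by linear_combination h)
    have hG : Complex.Gamma (c + 1 - (l : ℂ)) =
        (c - (l : ℂ)) * Complex.Gamma (c - (l : ℂ)) := by
      have h := Complex.Gamma_add_one _ hne
      rw [← h]
      ring_nf
    rw [hgdef]
    simp only
    rw [hG]
    ring
  have Sh : Summable (fun l : ℕ => (l : ℂ) * g l) := by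
    have he : (fun l : ℕ => (l : ℂ) * g l) = fun l => c * g l - (c - (l : ℂ)) * g l := by
      funext l; ring
    rw [he]
    exact (Sg.mul_left c).sub Sf
  -- Ψ (k-1) = ∑' g
  have hΨ1 : Ψ (k - 1) = ∑' l : ℕ, g l := by
    rw [hΨ (k - 1)]
    apply tsum_congr
    intro l
    rw [hgdef]
    simp only
    congr 2
    push_cast [hcdef]
    ring
  -- Ψ k = ∑' (c - l) * g l
  have hΨ0 : Ψ k = ∑' l : ℕ, (c - (l : ℂ)) * g l := by
    rw [hΨ k]
    apply tsum_congr
    intro l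
    have hne : c - (l : ℂ) ≠ 0 := by
      intro h
      exact hc l (by linear_combination h)
    have hG : Complex.Gamma (z + (k : ℂ) - n - 1/2 - (l : ℂ)) =
        (c - (l : ℂ)) * Complex.Gamma (c - (l : ℂ)) := by
      have h2 := Complex.Gamma_add_one _ hne
      rw [← h2]
      congr 1
      rw [hcdef]; ring
    rw [hG, hgdef]
    ring
  -- q * Ψ (k-2) = ∑' l * g l
  have hΨ2 : q * Ψ (k - 2) = ∑' l : ℕ, (l : ℂ) * g l := by
    rw [hΨ (k - 2), ← tsum_mul_left]
    have hterm : ∀ l : ℕ, q * (q ^ l / (l.factorial : ℂ) *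
        Complex.Gamma (z + ((k - 2 : ℤ) : ℂ) - n - 1/2 - (l : ℂ)))
        = ((l + 1 : ℕ) : ℂ) * g (l + 1) := by
      intro l
      rw [hgdef]
      simp only
      have h1 : z + ((k - 2 : ℤ) : ℂ) - n - 1/2 - (l : ℂ) = c - ((l + 1 : ℕ) : ℂ) := by
        rw [hcdef]; push_cast; ring
      rw [h1]
      have hfac : ((l.factorial : ℂ)) ≠ 0 := by
        exact_mod_cast Nat.factorial_ne_zero l
      have h2 : ((l : ℂ) + 1) ≠ 0 := by
        have : ((l + 1 : ℕ) : ℂ) ≠ 0 := Nat.cast_ne_zero.2 (Nat.succ_ne_zero l)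
        push_cast at this
        exact this
      rw [show (((l + 1 : ℕ)).factorial : ℂ) = ((l : ℂ) + 1) * (l.factorial : ℂ) by
        rw [Nat.factorial_succ]; push_cast; ring]
      rw [show ((l + 1 : ℕ) : ℂ) = (l : ℂ) + 1 by push_cast; ring]
      field_simp
      ring
    calc (∑' l : ℕ, q * (q ^ l / (l.factorial : ℂ) *
          Complex.Gamma (z + ((k - 2 : ℤ) : ℂ) - n - 1/2 - (l : ℂ))))
        = ∑' l : ℕ, ((l + 1 : ℕ) : ℂ) * g (l + 1) := tsum_congr hterm
      _ = ∑' l : ℕ, (l : ℂ) * g l := by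
          rw [Summable.tsum_eq_zero_add Sh]
          push_cast
          simp
  rw [hΨ0, hΨ1, hΨ2]
  rw [← tsum_mul_left, ← tsum_mul_left]
  rw [← Summable.tsum_add Sf Sh, ← Summable.tsum_add (Sf.add Sh) (Sg.mul_left _)]
  apply tsum_congr
  intro l
  have hk : c + (n + 1/2 - z) = (k : ℂ) - 1 := by rw [hcdef]; ring
  linear_combination g l * hk
end

section
/- Let q ∈ ℂ and k ∈ ℤ. On the open set of pairs (z, n) ∈ ℝ_{>0} × ℝ with z − n − 1/2 not an integer, define Φ(z, n) := exp((n − z)·log z + z) · Σ_{l=0}^{∞} (q^l / l!) · Γ(z − n + k − 1/2 − l) (the series converges absolutely). Then at every such point Φ has partial derivatives with respect to z and with respect to n, and (n/z)·Φ(z, n) = (∂Φ/∂z)(z, n) + (∂Φ/∂n)(z, n). -/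
/-!
Write `Φ(x, m) = e^{(m - x) log x + x} S(x - m + k - 1/2)` with `S(w) = ∑ q^l / l! Γ(w - l)`.
Since `S` enters only through `x - m`, its contributions to `∂Φ/∂z` and `∂Φ/∂n` cancel, and the
prefactor contributes `(n/z - log z) Φ` and `(log z) Φ`, which add up to `(n/z) Φ`.

The analytic content is that `S` is holomorphic off `ℤ`. On a closed ball at distance `≥ ε`
from `ℤ`, the recursion `Γ(w - l) = Γ(w - l - 1) (w - l - 1)` gives `|Γ(w - l)| ≤ M / ε^l`,
so the series is dominated by `M (|q|/ε)^l / l!` and is a uniform limit of holomorphic functions.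
-/

open Complex Metric
open scoped Nat

noncomputable def gammaShiftSeries (q w : ℂ) : ℂ :=
  ∑' l : ℕ, q ^ l / (l ! : ℂ) * Gamma (w - l)

lemma norm_Gamma_sub_nat_le {w : ℂ} {ε : ℝ} (hε : 0 < ε) (hw : ∀ j : ℤ, ε ≤ ‖w - j‖) (l : ℕ) :
    ‖Gamma (w - l)‖ ≤ ‖Gamma w‖ / ε ^ l := by
  induction l with
  | zero => simp
  | succ l ih =>
    have hpos : 0 < ‖w - (l + 1 : ℕ)‖ := hε.trans_le (by exact_mod_cast hw (l + 1))
    have hrec : Gamma (w - l) = Gamma (w - (l + 1 : ℕ)) * (w - (l + 1 : ℕ)) := by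
      rw [mul_comm, ← Gamma_add_one _ (norm_pos_iff.mp hpos)]; push_cast; ring_nf
    calc ‖Gamma (w - (l + 1 : ℕ))‖ = ‖Gamma (w - l)‖ / ‖w - (l + 1 : ℕ)‖ := by
          rw [hrec, norm_mul, mul_div_cancel_right₀ _ hpos.ne']
      _ ≤ ‖Gamma w‖ / ε ^ l / ε := by
          gcongr
          exact_mod_cast hw (l + 1)
      _ = ‖Gamma w‖ / ε ^ (l + 1) := by rw [pow_succ, div_div]

lemma exists_closedBall_far_from_intCast {w₀ : ℂ} (hw₀ : w₀ ∉ Set.range ((↑) : ℤ → ℂ)) :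
    ∃ ε > 0, ∀ w ∈ closedBall w₀ ε, ∀ j : ℤ, ε ≤ ‖w - j‖ := by
  obtain ⟨r, hr, hball⟩ := Metric.isOpen_iff.mp isOpen_compl_range_intCast w₀ hw₀
  refine ⟨r / 2, half_pos hr, fun w hw j => ?_⟩
  have hj : r ≤ dist (j : ℂ) w₀ := not_lt.mp fun h => hball (mem_ball.mpr h) ⟨j, rfl⟩
  have := dist_triangle (j : ℂ) w w₀
  rw [mem_closedBall] at hw
  rw [← dist_eq_norm, dist_comm]
  linarith

lemma differentiableAt_gammaShiftSeries (q : ℂ) {w₀ : ℂ}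
    (hw₀ : w₀ ∉ Set.range ((↑) : ℤ → ℂ)) : DifferentiableAt ℂ (gammaShiftSeries q) w₀ := by
  obtain ⟨ε, hε, hfar⟩ := exists_closedBall_far_from_intCast hw₀
  have hGamma : ∀ w ∈ closedBall w₀ ε, ∀ l : ℕ, DifferentiableAt ℂ Gamma (w - l) :=
    fun w hw l => differentiableAt_Gamma _ fun m hm => by
      have := hfar w hw (l - m)
      rw [show w = ((l - m : ℤ) : ℂ) by push_cast; linear_combination hm, sub_self,
        norm_zero] at this
      linarith
  obtain ⟨M, hM⟩ := (isCompact_closedBall w₀ ε).exists_bound_of_continuousOn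
    fun w hw => by simpa using (hGamma w hw 0).continuousAt.continuousWithinAt
  have hsum : Summable fun l : ℕ => M * ((‖q‖ / ε) ^ l / l !) :=
    (Real.summable_pow_div_factorial _).mul_left M
  refine (differentiableOn_tsum_of_summable_norm hsum (fun l w hw => ?_) isOpen_ball
    (fun l w hw => ?_)).differentiableAt (ball_mem_nhds w₀ hε)
  · exact (((hGamma w (ball_subset_closedBall hw) l).comp w
      ((hasDerivAt_id w).sub_const _).differentiableAt).const_mul _).differentiableWithinAt
  · have hw := ball_subset_closedBall hw
    calc ‖q ^ l / (l ! : ℂ) * Gamma (w - l)‖ ≤ ‖q‖ ^ l / l ! * (M / ε ^ l) := by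
          rw [norm_mul, norm_div, norm_pow, Complex.norm_natCast]
          gcongr
          exact (norm_Gamma_sub_nat_le hε (hfar w hw) l).trans (by gcongr; exact hM w hw)
      _ = M * ((‖q‖ / ε) ^ l / l !) := by ring

lemma hasDerivAt_exp_mul_comp_sub_left {S : ℂ → ℂ} {S' c : ℂ} {z n : ℝ} (hz : 0 < z)
    (hS : HasDerivAt S S' (z - n + c)) :
    HasDerivAt (fun x : ℝ => (Real.exp ((n - x) * Real.log x + x) : ℂ) * S (x - n + c))
      (Real.exp ((n - z) * Real.log z + z) * ((n / z - Real.log z) * S (z - n + c) + S')) z := by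
  have hE : HasDerivAt (fun x : ℝ => (n - x) * Real.log x + x) (n / z - Real.log z) z :=
    ((((hasDerivAt_id' z).const_sub n).fun_mul (Real.hasDerivAt_log hz.ne')).add
      (hasDerivAt_id' z)).congr_deriv (by field_simp; ring)
  have hS' : HasDerivAt (fun x : ℂ => S (x - n + c)) S' z := by
    simpa [Function.comp_def] using
      hS.comp (z : ℂ) (((hasDerivAt_id _).sub_const (n : ℂ)).add_const c)
  exact (hE.exp.ofReal_comp.fun_mul hS'.comp_ofReal).congr_deriv (by push_cast; ring)

lemma hasDerivAt_exp_mul_comp_sub_right {S : ℂ → ℂ} {S' c : ℂ} {z n : ℝ}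
    (hS : HasDerivAt S S' (z - n + c)) :
    HasDerivAt (fun m : ℝ => (Real.exp ((m - z) * Real.log z + z) : ℂ) * S (z - m + c))
      (Real.exp ((n - z) * Real.log z + z) * (Real.log z * S (z - n + c) - S')) n := by
  have hE : HasDerivAt (fun m : ℝ => (m - z) * Real.log z + z) (Real.log z) n := by
    simpa using (((hasDerivAt_id' n).sub_const z).mul_const (Real.log z)).add_const z
  have hS' : HasDerivAt (fun m : ℂ => S (z - m + c)) (-S') n := by
    simpa [Function.comp_def] using
      hS.comp (n : ℂ) (((hasDerivAt_id _).const_sub (z : ℂ)).add_const c)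
  exact (hE.exp.ofReal_comp.fun_mul hS'.comp_ofReal).congr_deriv (by push_cast; ring)

/-- The string equation `(n/z − ∂/∂z − ∂/∂n)Φ = 0` for the basis vector
`Φ(z,n) = e^{(n−z)log z + z} Σ_{l≥0}(q^l/l!)Γ(z−n+k−1/2−l)`. -/
theorem stmt7 (q : ℂ) (k : ℤ) (z n : ℝ) (hz : 0 < z)
    (h : ∀ m : ℤ, z - n - 1/2 ≠ (m : ℝ))
    (Φ : ℝ → ℝ → ℂ)
    (hΦ : ∀ x m : ℝ, Φ x m =
      (Real.exp ((m - x) * Real.log x + x) : ℂ) *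
        ∑' l : ℕ, q ^ l / (l.factorial : ℂ) *
          Complex.Gamma ((x : ℂ) - (m : ℂ) + (k : ℂ) - 1/2 - (l : ℂ))) :
    ∃ dz dn : ℂ,
      HasDerivAt (fun x => Φ x n) dz z ∧
      HasDerivAt (fun m => Φ z m) dn n ∧
      ((n : ℂ) / (z : ℂ)) * Φ z n = dz + dn := by
  have hΦ' : ∀ x m : ℝ, Φ x m = (Real.exp ((m - x) * Real.log x + x) : ℂ) *
      gammaShiftSeries q (x - m + ((k : ℂ) - 1/2)) := fun x m => by
    rw [hΦ, gammaShiftSeries, add_sub_assoc']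
  have hw : (z : ℂ) - n + ((k : ℂ) - 1/2) ∉ Set.range ((↑) : ℤ → ℂ) := by
    rintro ⟨j, hj⟩
    apply h (j - k)
    have : ((z - n - 1/2 : ℝ) : ℂ) = ((j - k : ℤ) : ℂ) := by
      push_cast
      linear_combination -hj
    exact_mod_cast this
  have hS := (differentiableAt_gammaShiftSeries q hw).hasDerivAt
  have hdz := hasDerivAt_exp_mul_comp_sub_left hz hS
  have hdn := hasDerivAt_exp_mul_comp_sub_right hS
  simp only [← hΦ'] at hdz hdn
  refine ⟨_, _, hdz, hdn, ?_⟩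
  rw [hΦ']
  field_simp
  ring
end

section
/- Let E be the unique ℂ-linear endomorphism of the polynomial ring ℂ[X] such that E(X^k) equals the ascending factorial X·(X+1)⋯(X+k−1) for every natural number k (with E(1) = 1). Then for every polynomial p ∈ ℂ[X], E(p′) = E(p) − ( (E p) composed with (X − 1) ), where p′ denotes the formal derivative of p. -/
open Polynomial

/-- If `E` is the ℂ-linear endomorphism of `ℂ[X]` sending `X^k` to the ascending
factorial `X(X+1)⋯(X+k−1)`, then `E(p′) = E(p) − (E p)∘(X−1)`. -/
theorem stmt11 (E : ℂ[X] →ₗ[ℂ] ℂ[X])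
    (hE : ∀ k : ℕ, E (X ^ k) = ∏ i ∈ Finset.range k, (X + C (i : ℂ))) :
    ∀ p : ℂ[X], E (derivative p) = E p - (E p).comp (X - 1) := by
  have key : ∀ n : ℕ, E (derivative ((X : ℂ[X]) ^ n))
      = E (X ^ n) - (E (X ^ n)).comp (X - 1) := by
    intro n
    cases n with
    | zero =>
      have h0 := hE 0
      simp only [pow_zero, Finset.range_zero, Finset.prod_empty] at h0
      simp [h0]
    | succ n =>
      rw [derivative_X_pow]
      simp only [Nat.add_sub_cancel]
      have h1 : E (C ((n + 1 : ℕ) : ℂ) * X ^ n) = C ((n + 1 : ℕ) : ℂ) * E (X ^ n) := by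
        rw [← smul_eq_C_mul, ← smul_eq_C_mul, map_smul]
      rw [h1, hE n, hE (n + 1)]
      have hcomp : ((∏ i ∈ Finset.range (n + 1), (X + C (i : ℂ))).comp (X - 1))
          = ∏ i ∈ Finset.range (n + 1), ((X + C (i : ℂ)).comp (X - 1)) := by
        simp [Polynomial.prod_comp]
      rw [hcomp]
      have h2 : ∀ i : ℕ, ((X : ℂ[X]) + C (i : ℂ)).comp (X - 1) = X + C (i : ℂ) - 1 := by
        intro i; simp only [add_comp, X_comp, C_comp]; ring
      simp only [h2]
      rw [Finset.prod_range_succ' (fun i => (X : ℂ[X]) + C (i : ℂ) - 1)]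
      rw [Finset.prod_range_succ]
      have h3 : ∀ i : ℕ, (X : ℂ[X]) + C ((i + 1 : ℕ) : ℂ) - 1 = X + C (i : ℂ) := by
        intro i; simp only [Nat.cast_add, Nat.cast_one, map_add, map_one]; ring
      simp only [h3]
      simp only [Nat.cast_add, Nat.cast_one, map_add, map_one, Nat.cast_zero, map_zero, mul_zero]
      ring
  intro p
  induction p using Polynomial.induction_on' with
  | add p q hp hq => rw [derivative_add, map_add, map_add, add_comp, hp, hq]; ring
  | monomial n a =>
    rw [← C_mul_X_pow_eq_monomial, ← smul_eq_C_mul, derivative_smul, map_smul, map_smul,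
      smul_comp, key, smul_sub]
end

section
/- Let r be a natural number, s : {1,…,r} → ℂ, and let z be a complex number that is not an integer. Then the family indexed by functions m : {1,…,r} → ℕ given by m ↦ ( ∏_{j=1}^{r} s_j^{m_j} / m_j! ) · Γ( z − Σ_{j=1}^{r} j·m_j ) is absolutely summable. -/
/- Since `|s_j|^{m_j} / m_j!` is summable over `ℕ` for each `j`, the product of these weights is
summable over `ℕ^r`, so it suffices to bound `|Γ(z - n)|` uniformly in `n : ℕ`. Once `n ≥ |z|`,
the functional equation `Γ(w + 1) = w Γ(w)` with `w = z - (n + 1)`, `|w| ≥ 1`, shows that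
`n ↦ |Γ(z - n)|` is non-increasing, so it is bounded. -/

open Filter

lemma summable_fin_pi_prod_of_nonneg {α : Type*} {r : ℕ} {g : Fin r → α → ℝ}
    (hg : ∀ j a, 0 ≤ g j a) (hgs : ∀ j, Summable (g j)) :
    Summable fun m : Fin r → α => ∏ j, g j (m j) := by
  induction r with
  | zero => exact .of_finite
  | succ r ih =>
    have htail : Summable fun m : Fin r → α => ∏ j, g j.succ (m j) :=
      ih (fun j => hg j.succ) fun j => hgs j.succ
    have hpair := (hgs 0).mul_of_nonneg htail (hg 0) fun _ => Finset.prod_nonneg fun _ _ => hg _ _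
    rw [← (Fin.consEquiv fun _ => α).summable_iff]
    exact hpair.congr fun p => by simp [Fin.prod_univ_succ]

lemma bddAbove_range_of_succ_le {α : Type*} [Preorder α] [IsDirectedOrder α] {f : ℕ → α} {k : ℕ}
    (hf : ∀ n ≥ k, f (n + 1) ≤ f n) : BddAbove (Set.range f) :=
  IsBoundedUnder.bddAbove_range
    ⟨f k, eventually_map.2 <| eventually_atTop.2
      ⟨k, fun _ hn => antitoneOn_nat_Ici_of_succ_le hf (le_refl k) hn hn⟩⟩

lemma norm_Gamma_sub_natCast_succ_le {z : ℂ} {n : ℕ} (hn : ‖z‖ ≤ n) :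
    ‖Complex.Gamma (z - (n + 1 : ℕ))‖ ≤ ‖Complex.Gamma (z - n)‖ := by
  have hw : 1 ≤ ‖z - (n + 1 : ℕ)‖ := by
    have := norm_sub_norm_le ((n + 1 : ℕ) : ℂ) z
    rw [Complex.norm_natCast, norm_sub_rev] at this
    push_cast at this ⊢
    linarith
  have hrec : Complex.Gamma (z - n) = (z - (n + 1 : ℕ)) * Complex.Gamma (z - (n + 1 : ℕ)) := by
    rw [← Complex.Gamma_add_one _ (norm_pos_iff.1 (one_pos.trans_le hw))]
    congr 1
    push_cast
    ring
  rw [hrec, norm_mul]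
  exact le_mul_of_one_le_left (norm_nonneg _) hw

lemma bddAbove_range_norm_Gamma_sub_natCast (z : ℂ) :
    BddAbove (Set.range fun n : ℕ => ‖Complex.Gamma (z - n)‖) :=
  bddAbove_range_of_succ_le (k := ⌈‖z‖⌉₊) fun _ hn =>
    norm_Gamma_sub_natCast_succ_le ((Nat.le_ceil _).trans (Nat.cast_le.2 hn))

theorem stmt13_general (r : ℕ) (s : Fin r → ℂ) (z : ℂ) :
    Summable (fun m : Fin r → ℕ =>
      (∏ j, s j ^ m j / ((m j).factorial : ℂ)) *
        Complex.Gamma (z - ((∑ j, (j.val + 1) * m j : ℕ) : ℂ))) := by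
  obtain ⟨C, hC⟩ := bddAbove_range_norm_Gamma_sub_natCast z
  have hweights : Summable fun m : Fin r → ℕ => ∏ j, ‖s j‖ ^ m j / ((m j).factorial : ℝ) :=
    summable_fin_pi_prod_of_nonneg (g := fun j (n : ℕ) => ‖s j‖ ^ n / n.factorial)
      (fun _ _ => by positivity)
      fun j => Real.summable_pow_div_factorial ‖s j‖
  refine Summable.of_norm_bounded (hweights.mul_right C) fun m => ?_
  simp only [norm_mul, norm_prod, norm_div, norm_pow, Complex.norm_natCast]
  gcongr
  exact hC ⟨_, rfl⟩

/-- Absolute summability of the multi-parameter Gamma series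
`Σ_m (∏_j s_j^{m_j}/m_j!) Γ(z − Σ_j j·m_j)` for non-integer `z`. -/
theorem stmt13 (r : ℕ) (s : Fin r → ℂ) (z : ℂ) (hz : ∀ m : ℤ, z ≠ (m : ℂ)) :
    Summable (fun m : Fin r → ℕ =>
      (∏ j, s j ^ m j / ((m j).factorial : ℂ)) *
        Complex.Gamma (z - ((∑ j, (j.val + 1) * m j : ℕ) : ℂ))) :=
  stmt13_general r s z
end

section
/- For every real number n, define f(x) := exp( (n − x)·( log x − log(x + 1) ) ) · (x + 1) · e^{−1} for real x > 0. Then lim_{x → +∞} x · ( f(x) − x − (1/2 − n) ) = n²/2 − 1/24. -/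
/-!
Put `u = 1/x`. For `x > 0`, `f x = x h(u)` with `h u = exp ((1/u - n) log (1 + u) - 1) (1 + u)`,
and the claim says `h u = 1 + (1/2 - n) u + (n²/2 - 1/24) u² + O(u³)`. This expansion is obtained
by composing `log (1 + u) / u = 1 - u/2 + u²/3 + O(u³)` with `exp t = 1 + t + t²/2 + O(t³)`:
the exponent is `(-1/2 - n) u + (1/3 + n/2) u² + O(u³)`.
-/

open Filter Real Asymptotics Topology

lemma Real.log_one_add_sub_taylor_isBigO :
    (fun u : ℝ => log (1 + u) - (u - u ^ 2 / 2 + u ^ 3 / 3)) =O[𝓝 0] (· ^ 4) := by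
  have h := (Complex.log_sub_logTaylor_isBigO 3).comp_tendsto
    (Complex.continuous_ofReal.tendsto' 0 0 rfl)
  rw [← Complex.isBigO_ofReal_left, ← Complex.isBigO_ofReal_right]
  refine h.congr' ?_ (.of_forall fun u => by simp)
  filter_upwards [eventually_gt_nhds (show (-1 : ℝ) < 0 by norm_num)] with u hu
  simp only [Function.comp_apply, Complex.logTaylor, Finset.sum_range_succ, Finset.sum_range_zero]
  push_cast [Complex.ofReal_log (by linarith : (0 : ℝ) ≤ 1 + u)]
  ring

lemma Real.exp_sub_taylor_isBigO :
    (fun t : ℝ => exp t - (1 + t + t ^ 2 / 2)) =O[𝓝 0] (· ^ 3) := by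
  simpa [Finset.sum_range_succ, add_assoc] using exp_sub_sum_range_isBigO_pow 3

def HasSecondOrderExpansion (l : Filter ℝ) (F : ℝ → ℝ) (c₀ c₁ c₂ : ℝ) : Prop :=
  (fun u => F u - (c₀ + c₁ * u + c₂ * u ^ 2)) =O[l] (· ^ 3)

namespace HasSecondOrderExpansion

variable {l : Filter ℝ} {F G : ℝ → ℝ} {a₀ a₁ a₂ b₀ b₁ b₂ : ℝ}

lemma congr' (h : HasSecondOrderExpansion l F a₀ a₁ a₂) (hFG : F =ᶠ[l] G) :
    HasSecondOrderExpansion l G a₀ a₁ a₂ :=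
  IsBigO.congr' h (hFG.mono fun u hu => by simp only [hu]) .rfl

lemma quadratic (a₀ a₁ a₂ : ℝ) :
    HasSecondOrderExpansion l (fun u => a₀ + a₁ * u + a₂ * u ^ 2) a₀ a₁ a₂ := by
  simpa [HasSecondOrderExpansion] using isBigO_zero _ _

lemma tendsto (h : HasSecondOrderExpansion l F a₀ a₁ a₂) (hl : l ≤ 𝓝 0) :
    Tendsto F l (𝓝 a₀) := by
  have hpoly : Tendsto (fun u : ℝ => a₀ + a₁ * u + a₂ * u ^ 2) l (𝓝 a₀) :=
    ((by fun_prop : Continuous fun u : ℝ => a₀ + a₁ * u + a₂ * u ^ 2).tendsto' 0 a₀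
      (by simp)).mono_left hl
  have hrem : Tendsto (fun u => F u - (a₀ + a₁ * u + a₂ * u ^ 2)) l (𝓝 0) :=
    h.trans_tendsto (((continuous_pow 3).tendsto' 0 0 (by simp)).mono_left hl)
  simpa using hrem.add hpoly

lemma isBigO_id (h : HasSecondOrderExpansion l F 0 a₁ a₂) (hl : l ≤ 𝓝 0) :
    F =O[l] fun u => u := by
  have hpow {n : ℕ} (hn : 1 ≤ n) : (fun u : ℝ => u ^ n) =O[l] fun u => u := by
    rcases hn.eq_or_lt with rfl | hn
    · simpa using isBigO_refl (fun u : ℝ => u) l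
    · simpa using ((isLittleO_pow_pow hn).isBigO.mono hl)
  have hpoly := ((hpow le_rfl).const_mul_left a₁).add ((hpow one_le_two).const_mul_left a₂)
  simpa using (IsBigO.trans h (hpow (by norm_num))).add hpoly

lemma add (hF : HasSecondOrderExpansion l F a₀ a₁ a₂) (hG : HasSecondOrderExpansion l G b₀ b₁ b₂) :
    HasSecondOrderExpansion l (F + G) (a₀ + b₀) (a₁ + b₁) (a₂ + b₂) :=
  (IsBigO.add hF hG).congr_left fun u => by simp only [Pi.add_apply]; ring

lemma const_mul (h : HasSecondOrderExpansion l F a₀ a₁ a₂) (c : ℝ) :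
    HasSecondOrderExpansion l (fun u => c * F u) (c * a₀) (c * a₁) (c * a₂) :=
  (IsBigO.const_mul_left h c).congr_left fun u => by ring

lemma mul (hF : HasSecondOrderExpansion l F a₀ a₁ a₂) (hG : HasSecondOrderExpansion l G b₀ b₁ b₂)
    (hl : l ≤ 𝓝 0) :
    HasSecondOrderExpansion l (F * G) (a₀ * b₀) (a₀ * b₁ + a₁ * b₀)
      (a₀ * b₂ + a₁ * b₁ + a₂ * b₀) := by
  have hFb := (hF.tendsto hl).isBigO_one ℝ
  have hQb := ((quadratic (l := l) b₀ b₁ b₂).tendsto hl).isBigO_one ℝ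
  -- With `P`, `Q` the two quadratics, `F G` minus the truncation of `P Q` at `u²` is
  -- `F (G - Q) + Q (F - P) + u³ (a₁ b₂ + a₂ b₁ + a₂ b₂ u)`.
  have hPQ : (fun u : ℝ => u ^ 3 * (a₁ * b₂ + a₂ * b₁ + a₂ * b₂ * u)) =O[l] (· ^ 3) := by
    have hk := ((quadratic (l := l) (a₁ * b₂ + a₂ * b₁) (a₂ * b₂) 0).tendsto hl).isBigO_one ℝ
    simpa using (isBigO_refl (· ^ 3) l).mul hk
  have := ((IsBigO.mul hFb hG).add (IsBigO.mul hQb hF)).congr_right (fun _ => one_mul _)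
  refine (this.add hPQ).congr_left fun u => ?_
  simp only [Pi.mul_apply]; ring

lemma exp_comp (h : HasSecondOrderExpansion l F 0 a₁ a₂) (hl : l ≤ 𝓝 0) :
    HasSecondOrderExpansion l (fun u => exp (F u)) 1 a₁ (a₂ + a₁ ^ 2 / 2) := by
  have hE : (fun u => exp (F u) - (1 + F u + F u ^ 2 / 2)) =O[l] (· ^ 3) :=
    (Real.exp_sub_taylor_isBigO.comp_tendsto (h.tendsto hl)).trans ((h.isBigO_id hl).pow 3)
  have hT : HasSecondOrderExpansion l (fun u => 1 + F u + F u ^ 2 / 2) 1 a₁ (a₂ + a₁ ^ 2 / 2) := by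
    convert ((quadratic 1 0 0).add h).add ((h.mul h hl).const_mul (1 / 2)) using 1
    · ext u
      simp only [Pi.add_apply, Pi.mul_apply]
      ring
    all_goals ring
  exact (IsBigO.add hE hT).congr_left fun u => by ring

lemma tendsto_sub_div_sq (h : HasSecondOrderExpansion (𝓝[≠] 0) F a₀ a₁ a₂) :
    Tendsto (fun u => (F u - a₀ - a₁ * u) / u ^ 2) (𝓝[≠] 0) (𝓝 a₂) := by
  have hrem : (fun u => (F u - a₀ - a₁ * u) / u ^ 2 - a₂) =O[𝓝[≠] 0] fun u => u := by
    refine (IsBigO.mul h (isBigO_refl (fun u : ℝ => (u ^ 2)⁻¹) _)).congr' ?_ ?_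
    all_goals filter_upwards [self_mem_nhdsWithin] with u (hu : u ≠ 0)
    · field_simp; ring
    · field_simp
  have := hrem.trans_tendsto (tendsto_id.mono_left nhdsWithin_le_nhds)
  simpa using this.add_const a₂

end HasSecondOrderExpansion

lemma hasSecondOrderExpansion_log_one_add_div :
    HasSecondOrderExpansion (𝓝[≠] 0) (fun u => log (1 + u) / u) 1 (-1 / 2) (1 / 3) := by
  refine ((Real.log_one_add_sub_taylor_isBigO.mono nhdsWithin_le_nhds).mul
    (isBigO_refl (fun u : ℝ => u⁻¹) _)).congr' ?_ ?_
  all_goals filter_upwards [self_mem_nhdsWithin] with u (hu : u ≠ 0)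
  · field_simp; ring
  · field_simp

lemma hasSecondOrderExpansion_symbol (n : ℝ) :
    HasSecondOrderExpansion (𝓝[≠] 0) (fun u => exp ((u⁻¹ - n) * log (1 + u) - 1) * (1 + u))
      1 (1 / 2 - n) (n ^ 2 / 2 - 1 / 24) := by
  have hl : 𝓝[≠] (0 : ℝ) ≤ 𝓝 0 := nhdsWithin_le_nhds
  have hexponent : HasSecondOrderExpansion (𝓝[≠] 0) (fun u => (u⁻¹ - n) * log (1 + u) - 1)
      0 (-1 / 2 - n) (1 / 3 + n / 2) := by
    convert ((hasSecondOrderExpansion_log_one_add_div.mul (.quadratic 1 (-n) 0) hl).add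
      (.quadratic (-1) 0 0)).congr' ?_ using 1
    iterate 3 ring
    filter_upwards [self_mem_nhdsWithin] with u (hu : u ≠ 0)
    simp only [Pi.add_apply, Pi.mul_apply]
    field_simp
    ring
  convert (hexponent.exp_comp hl).mul (.quadratic 1 1 0) hl using 1
  · ext u
    simp only [Pi.mul_apply]
    ring
  all_goals ring

/-- Large-`x` expansion of the recursion operator symbol
`f(x) = (x/(x+1))^{n−x}(x+1)e^{−1} = x + 1/2 − n + (n²/2 − 1/24)/x + O(x^{−2})`. -/
theorem stmt17 (n : ℝ)
    (f : ℝ → ℝ)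
    (hf : ∀ x : ℝ, 0 < x → f x =
      Real.exp ((n - x) * (Real.log x - Real.log (x + 1))) * (x + 1) * Real.exp (-1)) :
    Filter.Tendsto (fun x : ℝ => x * (f x - x - (1/2 - n))) Filter.atTop
      (nhds (n ^ 2 / 2 - 1/24)) := by
  have hinv : Tendsto (fun x : ℝ => x⁻¹) atTop (𝓝[≠] 0) :=
    tendsto_inv_atTop_nhdsGT_zero.mono_right (nhdsWithin_mono _ fun u (hu : 0 < u) => hu.ne')
  refine ((hasSecondOrderExpansion_symbol n).tendsto_sub_div_sq.comp hinv).congr' ?_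
  filter_upwards [eventually_gt_atTop 0] with x hx
  have hlog : log (1 + x⁻¹) = log (x + 1) - log x := by
    rw [← log_div (by positivity) hx.ne', add_div, div_self hx.ne', one_div]
  rw [Function.comp_apply, hf x hx, hlog, inv_inv,
    show (x - n) * (log (x + 1) - log x) - 1 = (n - x) * (log x - log (x + 1)) + -1 by ring,
    exp_add]
  field_simp
end
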